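/- Let G be a connected simple graph on n ≥ 2 vertices with distance matrix D whose (i,j) entries are d_{ij}. Then DEE(G) < n - 1 + e^{√(2·Σ_{i<j} d_{ij}² - 1)}. -/

import Mathlib

namespace DistanceEstrada

variable {n : ℕ}

/-- The distance matrix of a simple graph on `Fin n`. -/
noncomputable def distMatrix (G : SimpleGraph (Fin n)) : Matrix (Fin n) (Fin n) ℝ :=
  fun i j => (G.dist i j : ℝ)

lemma distMatrix_isHermitian (G : SimpleGraph (Fin n)) : (distMatrix G).IsHermitian := by
  unfold Matrix.IsHermitian
  ext i j
  simp [distMatrix, Matrix.conjTranspose_apply, SimpleGraph.dist_comm]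

/-- The distance eigenvalues of `G` (in no particular order). -/
noncomputable def distEig (G : SimpleGraph (Fin n)) : Fin n → ℝ :=
  (distMatrix_isHermitian G).eigenvalues

/-- The distance Estrada index. -/
noncomputable def DEE (G : SimpleGraph (Fin n)) : ℝ :=
  ∑ i, Real.exp (distEig G i)

open Classical in
/-- The adjacency matrix of `G` over `ℝ`. -/
noncomputable def adjMat (G : SimpleGraph (Fin n)) : Matrix (Fin n) (Fin n) ℝ :=
  fun i j => if G.Adj i j then 1 else 0

lemma adjMat_isHermitian (G : SimpleGraph (Fin n)) : (adjMat G).IsHermitian := by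
  unfold Matrix.IsHermitian
  ext i j
  simp only [adjMat, Matrix.conjTranspose_apply, star_trivial]
  rw [SimpleGraph.adj_comm]

/-- The adjacency eigenvalues of `G` (in no particular order). -/
noncomputable def adjEig (G : SimpleGraph (Fin n)) : Fin n → ℝ :=
  (adjMat_isHermitian G).eigenvalues

/-- The Estrada index. -/
noncomputable def EE (G : SimpleGraph (Fin n)) : ℝ :=
  ∑ i, Real.exp (adjEig G i)

/-! Let `λᵢ` be the distance eigenvalues and `f t = eᵗ - 1 - t`, so that `DEE = n + ∑ f(λᵢ)`
because `∑ λᵢ = tr D = 0`; moreover `∑ λᵢ² = tr D² = 2 ∑_{i<j} dᵢⱼ² =: M ≥ n(n - 1)`.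
All Taylor coefficients of `f` are nonnegative, so `f t ≤ f |t|` and `f` is superadditive along
Euclidean norms. Singling out an eigenvalue of largest modulus `x = |λⱼ|`, the others contribute
at most `f y` with `y² = M - x²`. Since `x² ≥ M / n ≥ n - 1` and, by Cauchy–Schwarz and the zero
trace, `x² ≤ (n - 1) y²`, both `x` and `y` are at least `1`, and for such `x, y` an elementary
estimate gives `f x + f y < e^{√(x² + y² - 1)} - 1`. -/

open Real Finset Matrix
open scoped Nat

theorem _root_.Matrix.IsHermitian.trace_mul_self_eq_sum_sq {m 𝕜 : Type*} [Fintype m] [DecidableEq m]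
    [RCLike 𝕜] {A : Matrix m m 𝕜} (hA : A.IsHermitian) :
    (A * A).trace = ∑ i, (hA.eigenvalues i : 𝕜) ^ 2 := by
  conv_lhs => rw [hA.spectral_theorem, ← map_mul, Unitary.conjStarAlgAut_apply, trace_mul_cycle,
    Unitary.coe_star_mul_self, one_mul, diagonal_mul_diagonal, trace_diagonal]
  simp [sq]

theorem _root_.Finset.sum_sum_eq_two_mul_sum_lt {ι R : Type*} [Fintype ι] [LinearOrder ι]
    [CommSemiring R] (f : ι → ι → R) (hsymm : ∀ i j, f i j = f j i) (hdiag : ∀ i, f i i = 0) :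
    ∑ i, ∑ j, f i j = 2 * ∑ p ∈ univ.filter (fun p : ι × ι => p.1 < p.2), f p.1 p.2 := by
  have hsplit (i j : ι) : f i j = (if i < j then f i j else 0) + (if j < i then f j i else 0) := by
    rcases lt_trichotomy i j with h | rfl | h
    · simp [h, h.not_gt]
    · simp [hdiag]
    · simp [h, h.not_gt, hsymm i j]
  calc ∑ i, ∑ j, f i j
      = ∑ i, ∑ j, (if i < j then f i j else 0) + ∑ i, ∑ j, (if j < i then f j i else 0) := by
        simp only [← sum_add_distrib, ← hsplit]
    _ = 2 * ∑ i, ∑ j, (if i < j then f i j else 0) := by rw [sum_comm (γ := ι)]; ring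
    _ = _ := by simp [sum_filter, Fintype.sum_prod_type]

lemma exp_sub_one_sub_le_abs (t : ℝ) : exp t - 1 - t ≤ exp |t| - 1 - |t| := by
  rcases le_or_gt 0 t with ht | ht
  · rw [abs_of_nonneg ht]
  · have := self_le_sinh_iff.2 (neg_nonneg.2 ht.le)
    rw [sinh_eq, neg_neg] at this
    rw [abs_of_neg ht]
    linarith

lemma hasSum_exp_sub_one_sub (t : ℝ) :
    HasSum (fun k : ℕ => t ^ (k + 2) / (k + 2)!) (exp t - 1 - t) := by
  have h := NormedSpace.expSeries_div_hasSum_exp (𝔸 := ℝ) t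
  rw [← Real.exp_eq_exp_ℝ] at h
  simpa [sum_range_succ, sub_sub] using (hasSum_nat_add_iff' 2).2 h

lemma exp_sub_one_sub_add_le {a b : ℝ} (ha : 0 ≤ a) (hb : 0 ≤ b) :
    (exp a - 1 - a) + (exp b - 1 - b) ≤ exp √(a ^ 2 + b ^ 2) - 1 - √(a ^ 2 + b ^ 2) := by
  set c := √(a ^ 2 + b ^ 2)
  have hc : c ^ 2 = a ^ 2 + b ^ 2 := sq_sqrt (by positivity)
  have hac : a ≤ c := le_sqrt_of_sq_le (by nlinarith)
  have hbc : b ≤ c := le_sqrt_of_sq_le (by nlinarith)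
  refine hasSum_le (fun k => ?_) ((hasSum_exp_sub_one_sub a).add (hasSum_exp_sub_one_sub b))
    (hasSum_exp_sub_one_sub c)
  rw [← add_div]
  gcongr
  calc a ^ (k + 2) + b ^ (k + 2) = a ^ k * a ^ 2 + b ^ k * b ^ 2 := by ring
    _ ≤ c ^ k * a ^ 2 + c ^ k * b ^ 2 := by gcongr
    _ = c ^ (k + 2) := by rw [pow_add, hc]; ring

lemma sum_exp_sub_one_sub_le {ι : Type*} (s : Finset ι) (v : ι → ℝ) :
    ∑ i ∈ s, (exp (v i) - 1 - v i) ≤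
      exp √(∑ i ∈ s, v i ^ 2) - 1 - √(∑ i ∈ s, v i ^ 2) := by
  induction s using Finset.cons_induction with
  | empty => simp
  | cons j s hj ih =>
    have h := exp_sub_one_sub_add_le (abs_nonneg (v j)) (sqrt_nonneg (∑ i ∈ s, v i ^ 2))
    rw [sq_abs, sq_sqrt (sum_nonneg fun i _ => sq_nonneg (v i))] at h
    rw [sum_cons, sum_cons]
    linarith [exp_sub_one_sub_le_abs (v j)]

lemma exp_add_le_mul {a t : ℝ} (ht₀ : 0 ≤ t) (ht₁ : t ≤ 1) :
    exp (a + t) ≤ exp a * (1 + t + 3 / 4 * t ^ 2) := by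
  have h := exp_bound' ht₀ ht₁ (n := 2) (by norm_num)
  norm_num [sum_range_succ] at h
  rw [exp_add]
  gcongr
  linarith

lemma exp_two_lt : exp 2 < 7.39 := by
  rw [show (2 : ℝ) = 1 + 1 by norm_num, exp_add]
  nlinarith [exp_pos 1, exp_one_lt_d9]

/-- Near `y = 1` the margin is below `10%`, hence the second-order bounds on `exp` around `1`
and `2`. -/
lemma exp_mul_lt_of_one_le {y : ℝ} (hy : 1 ≤ y) :
    exp y * (5 * y + 2 - 2 * y ^ 2) < 5 * y + 10 * y ^ 2 := by
  rcases le_or_gt (5 * y + 2 - 2 * y ^ 2) 0 with hq | hq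
  · nlinarith [mul_nonpos_of_nonneg_of_nonpos (exp_pos y).le hq]
  have hy3 : y ≤ 3 := by nlinarith
  rcases le_total y 2 with hy2 | hy2
  · obtain ⟨t, ht₀, ht₁, rfl⟩ : ∃ t, 0 ≤ t ∧ t ≤ 1 ∧ y = 1 + t := ⟨y - 1, by grind⟩
    have he := exp_add_le_mul (a := 1) ht₀ ht₁
    have hP : 0 ≤ 1 + t + 3 / 4 * t ^ 2 := by positivity
    calc exp (1 + t) * (5 * (1 + t) + 2 - 2 * (1 + t) ^ 2)
        ≤ 2.7182818286 * (1 + t + 3 / 4 * t ^ 2) * (5 * (1 + t) + 2 - 2 * (1 + t) ^ 2) := by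
          gcongr
          exact he.trans (by gcongr; exact exp_one_lt_d9.le)
      _ < _ := by nlinarith [mul_nonneg ht₀ (sub_nonneg.2 ht₁),
        mul_nonneg (mul_nonneg ht₀ ht₀) (sub_nonneg.2 ht₁)]
  · obtain ⟨t, ht₀, ht₁, rfl⟩ : ∃ t, 0 ≤ t ∧ t ≤ 1 ∧ y = 2 + t := ⟨y - 2, by grind⟩
    have he := exp_add_le_mul (a := 2) ht₀ ht₁
    have hP : 0 ≤ 1 + t + 3 / 4 * t ^ 2 := by positivity
    calc exp (2 + t) * (5 * (2 + t) + 2 - 2 * (2 + t) ^ 2)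
        ≤ 7.39 * (1 + t + 3 / 4 * t ^ 2) * (5 * (2 + t) + 2 - 2 * (2 + t) ^ 2) := by
          gcongr
          exact he.trans (by gcongr; exact exp_two_lt.le)
      _ < _ := by nlinarith [mul_nonneg ht₀ (sub_nonneg.2 ht₁),
        mul_nonneg (mul_nonneg ht₀ ht₀) (sub_nonneg.2 ht₁)]

lemma exp_add_exp_lt_of_le {x y : ℝ} (hy : 1 ≤ y) (hyx : y ≤ x) :
    exp x + exp y < 1 + x + y + exp √(x ^ 2 + y ^ 2 - 1) := by
  -- `s - x = (y² - 1) / (s + x)` with `s ≤ 3x/2`; convexity of `exp` and the growth of `eᵗ / t`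
  -- reduce the claim to `exp_mul_lt_of_one_le` at `y`.
  set s := √(x ^ 2 + y ^ 2 - 1)
  have hs : s ^ 2 = x ^ 2 + y ^ 2 - 1 := sq_sqrt (by nlinarith)
  have hxs : x ≤ s := le_sqrt_of_sq_le (by nlinarith)
  have hsx : s ≤ 3 / 2 * x := by nlinarith
  have hconv : exp x * (1 + (s - x)) ≤ exp s := by
    calc exp x * (1 + (s - x)) ≤ exp x * exp (s - x) := by
          gcongr; linarith [add_one_le_exp (s - x)]
      _ = exp s := by rw [← exp_add]; ring_nf
  have hgrowth : exp y * x ≤ exp x * y := by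
    have h : exp y * (1 + (x - y)) ≤ exp x := by
      calc exp y * (1 + (x - y)) ≤ exp y * exp (x - y) := by
            gcongr; linarith [add_one_le_exp (x - y)]
        _ = exp x := by rw [← exp_add]; ring_nf
    nlinarith [exp_pos y, mul_nonneg (sub_nonneg.2 hy) (sub_nonneg.2 hyx)]
  have hgap : 2 * (y ^ 2 - 1) ≤ 5 * x * (s - x) := by nlinarith
  have hx : 0 < x := by linarith
  have hy' : 0 < y := by linarith
  suffices 5 * x * y * (exp y - 1 - x - y) < 5 * x * y * (exp x * (s - x)) by
    nlinarith [lt_of_mul_lt_mul_left this (by positivity)]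
  have hy1 : 0 ≤ y ^ 2 - 1 := by nlinarith
  calc 5 * x * y * (exp y - 1 - x - y) ≤ x * (5 * y * (exp y - 1 - 2 * y)) := by
        nlinarith [mul_nonneg (mul_nonneg hx.le hy'.le) (sub_nonneg.2 hyx)]
    _ < x * (2 * exp y * (y ^ 2 - 1)) :=
        mul_lt_mul_of_pos_left (by linarith [exp_mul_lt_of_one_le hy]) hx
    _ ≤ 2 * (exp x * y) * (y ^ 2 - 1) := by
        nlinarith [mul_le_mul_of_nonneg_right hgrowth hy1]
    _ ≤ exp x * y * (5 * x * (s - x)) := by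
        nlinarith [mul_le_mul_of_nonneg_left hgap (by positivity : 0 ≤ exp x * y)]
    _ = 5 * x * y * (exp x * (s - x)) := by ring

lemma exp_add_exp_lt {x y : ℝ} (hx : 1 ≤ x) (hy : 1 ≤ y) :
    exp x + exp y < 1 + x + y + exp √(x ^ 2 + y ^ 2 - 1) := by
  rcases le_total y x with hyx | hxy
  · exact exp_add_exp_lt_of_le hy hyx
  · have h := exp_add_exp_lt_of_le hx hxy
    rw [add_comm (y ^ 2)] at h
    linarith

section ZeroSum

variable {ι : Type*} [Fintype ι] [DecidableEq ι] {v : ι → ℝ}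

lemma sq_le_card_sub_one_mul_sum_sq_erase (hv : ∑ i, v i = 0) (j : ι) :
    v j ^ 2 ≤ (Fintype.card ι - 1) * ∑ i ∈ univ.erase j, v i ^ 2 := by
  have hj : v j = -∑ i ∈ univ.erase j, v i := by
    rw [← add_sum_erase _ _ (mem_univ j)] at hv
    linarith
  calc v j ^ 2 = (∑ i ∈ univ.erase j, v i) ^ 2 := by rw [hj, neg_sq]
    _ ≤ #(univ.erase j) * ∑ i ∈ univ.erase j, v i ^ 2 := sq_sum_le_card_mul_sum_sq
    _ = _ := by rw [cast_card_erase_of_mem (mem_univ j), card_univ]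

lemma sum_exp_le_of_sum_eq_zero (hv : ∑ i, v i = 0) (j : ι) :
    ∑ i, exp (v i) ≤ Fintype.card ι + (exp |v j| - 1 - |v j|) +
      (exp √(∑ i ∈ univ.erase j, v i ^ 2) - 1 - √(∑ i ∈ univ.erase j, v i ^ 2)) := by
  have hsplit : ∑ i, exp (v i) = ∑ i, (1 + v i) + ((exp (v j) - 1 - v j) +
      ∑ i ∈ univ.erase j, (exp (v i) - 1 - v i)) := by
    rw [add_sum_erase _ (fun i => exp (v i) - 1 - v i) (mem_univ j), ← sum_add_distrib]
    exact sum_congr rfl fun i _ => by ring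
  rw [hsplit, sum_add_distrib, hv, sum_const, card_univ, nsmul_one]
  linarith [exp_sub_one_sub_le_abs (v j), sum_exp_sub_one_sub_le (univ.erase j) v]

theorem sum_exp_lt_of_sum_eq_zero (hcard : 2 ≤ Fintype.card ι) (hv : ∑ i, v i = 0)
    (hsq : Fintype.card ι * (Fintype.card ι - 1) ≤ ∑ i, v i ^ 2) :
    ∑ i, exp (v i) < Fintype.card ι - 1 + exp √(∑ i, v i ^ 2 - 1) := by
  have : Nonempty ι := Fintype.card_pos_iff.1 (by omega)
  obtain ⟨j, -, hj⟩ := exists_max_image univ (fun i => |v i|) univ_nonempty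
  have hN : (2 : ℝ) ≤ Fintype.card ι := by exact_mod_cast hcard
  set N : ℝ := (Fintype.card ι : ℝ)
  set x := |v j|
  set y := √(∑ i ∈ univ.erase j, v i ^ 2)
  have hsum_sq : ∑ i, v i ^ 2 = x ^ 2 + y ^ 2 := by
    rw [sq_abs, sq_sqrt (sum_nonneg fun i _ => sq_nonneg _)]
    exact (add_sum_erase univ (fun i => v i ^ 2) (mem_univ j)).symm
  have hx_sq : N - 1 ≤ x ^ 2 := by
    have : ∑ i, v i ^ 2 ≤ N * x ^ 2 := by
      simpa [sq_abs] using sum_le_card_nsmul univ (fun i => v i ^ 2) (x ^ 2)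
        fun i _ => by simpa [sq_abs] using pow_le_pow_left₀ (abs_nonneg _) (hj i (mem_univ i)) 2
    nlinarith
  have hy_sq : x ^ 2 ≤ (N - 1) * y ^ 2 := by
    rw [sq_abs, sq_sqrt (sum_nonneg fun i _ => sq_nonneg _)]
    exact sq_le_card_sub_one_mul_sum_sq_erase hv j
  have hx1 : 1 ≤ x := by nlinarith [abs_nonneg (v j)]
  have hy1 : 1 ≤ y := by
    have : 1 ≤ y ^ 2 := le_of_mul_le_mul_left (by linarith) (by linarith : 0 < N - 1)
    nlinarith [sqrt_nonneg (∑ i ∈ univ.erase j, v i ^ 2)]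
  calc ∑ i, exp (v i) ≤ N + (exp x - 1 - x) + (exp y - 1 - y) := sum_exp_le_of_sum_eq_zero hv j
    _ < N - 1 + exp √(x ^ 2 + y ^ 2 - 1) := by linarith [exp_add_exp_lt hx1 hy1]
    _ = N - 1 + exp √(∑ i, v i ^ 2 - 1) := by rw [hsum_sq]

end ZeroSum

lemma sum_distEig (G : SimpleGraph (Fin n)) : ∑ i, distEig G i = 0 := by
  have h := (distMatrix_isHermitian G).trace_eq_sum_eigenvalues
  simp only [RCLike.ofReal_real_eq_id, id] at h
  rw [distEig, ← h]
  simp [trace, distMatrix]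

lemma sum_distEig_sq (G : SimpleGraph (Fin n)) :
    ∑ i, distEig G i ^ 2 = ∑ i, ∑ j, (G.dist i j : ℝ) ^ 2 := by
  have h := (distMatrix_isHermitian G).trace_mul_self_eq_sum_sq
  simp only [RCLike.ofReal_real_eq_id, id] at h
  rw [distEig, ← h]
  simp [trace, distMatrix, mul_apply, sq, SimpleGraph.dist_comm]

lemma card_mul_le_sum_sq_dist {G : SimpleGraph (Fin n)} (hconn : G.Connected) :
    (n : ℝ) * (n - 1) ≤ ∑ i, ∑ j, (G.dist i j : ℝ) ^ 2 := by
  calc (n : ℝ) * (n - 1) = ∑ i : Fin n, ∑ j : Fin n, (1 - if i = j then 1 else 0) := by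
        simp [sum_sub_distrib]
        ring
    _ ≤ _ := by
      refine sum_le_sum fun i _ => sum_le_sum fun j _ => ?_
      split_ifs with hij
      · simp [hij]
      · have h : (1 : ℝ) ≤ G.dist i j := by exact_mod_cast hconn.pos_dist_of_ne hij
        simpa [hij] using one_le_pow₀ (n := 2) h

/-- Intermediate bound in the proof of Theorem 5: for a connected graph `G` on `n ≥ 2` vertices,
`DEE(G) < n - 1 + e^{√(2 Σ_{i<j} d_{ij}² - 1)}`. -/
theorem distance_estrada_upper_bound_moments {n : ℕ} (hn : 2 ≤ n)
    (G : SimpleGraph (Fin n)) (hconn : G.Connected) :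
    DEE G < (n : ℝ) - 1 + Real.exp (Real.sqrt
      (2 * ∑ p ∈ Finset.univ.filter (fun p : Fin n × Fin n => p.1 < p.2),
        (G.dist p.1 p.2 : ℝ) ^ 2 - 1)) := by
  have hsq : ∑ i, distEig G i ^ 2 = 2 * ∑ p ∈ univ.filter (fun p : Fin n × Fin n => p.1 < p.2),
      (G.dist p.1 p.2 : ℝ) ^ 2 := by
    rw [sum_distEig_sq, sum_sum_eq_two_mul_sum_lt _ (fun i j => by rw [SimpleGraph.dist_comm])
      (fun i => by simp)]
  have h := sum_exp_lt_of_sum_eq_zero (v := distEig G) (by simpa using hn) (sum_distEig G)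
    (by simpa [sum_distEig_sq] using card_mul_le_sum_sq_dist hconn)
  simpa [DEE, hsq] using h

end DistanceEstrada
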